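/- Let X be a Banach lattice on ℝⁿ with the Fatou property in which a linear operator T nondegenerate along a direction is bounded. Then the averaging operators A_S f = Σ_{Q∈S} f_Q χ_Q over pairwise disjoint collections S of balls are uniformly bounded on X (with bound independent of S). -/

import Mathlib

open MeasureTheory Metric Filter
open scoped ENNReal Topology

noncomputable section

/-- Euclidean space `ℝⁿ` (as a pi type, with Lebesgue measure). -/
abbrev En (n : ℕ) : Type := Fin n → ℝ

/-- Average of `w` over the ball `B(c,r)` with respect to Lebesgue measure. -/
def ballAvg {n : ℕ} (w : En n → ℝ) (c : En n) (r : ℝ) : ℝ :=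
  ⨍ y in Metric.ball c r, w y

/-- The (uncentered) Hardy–Littlewood maximal operator: supremum of the averages of `|f|`
over all balls containing `x`. -/
def MHL {n : ℕ} (f : En n → ℝ) (x : En n) : ℝ :=
  ⨆ B : {cr : En n × ℝ // 0 < cr.2 ∧ x ∈ Metric.ball cr.1 cr.2},
    ⨍ y in Metric.ball B.1.1 B.1.2, |f y|

/-- The Muckenhoupt class `A₁` with constant `C`: `M w ≤ C·w` almost everywhere. -/
def IsA1 {n : ℕ} (w : En n → ℝ) (C : ℝ) : Prop :=
  ∀ᵐ x ∂(volume : Measure (En n)), MHL w x ≤ C * w x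

/-- The Muckenhoupt class `A_p` (`1 < p < ∞`) with constant `C`:
`sup_B (avg_B w) · (avg_B w^{-1/(p-1)})^{p-1} ≤ C`. -/
def IsAp {n : ℕ} (w : En n → ℝ) (p C : ℝ) : Prop :=
  ∀ (c : En n) (r : ℝ), 0 < r →
    ballAvg w c r * (ballAvg (fun y => w y ^ (-1 / (p - 1))) c r) ^ (p - 1) ≤ C

/-- `T` is nondegenerate along the direction `x₀` with constant `c`: for every ball
`B = B(z,r)` and every nonnegative locally summable `f` supported on `B`,
`|Tf(x)| ≥ c·f_B` for all `x ∈ B ± r·x₀`. -/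
def NondegAlong {n : ℕ} (T : (En n → ℝ) → (En n → ℝ)) (x₀ : En n) (c : ℝ) : Prop :=
  ∀ (z : En n) (r : ℝ), 0 < r → ∀ f : En n → ℝ, (∀ x, 0 ≤ f x) →
    LocallyIntegrable f volume → (∀ x, x ∉ Metric.ball z r → f x = 0) →
    ∀ x : En n,
      (x ∈ Metric.ball (z + r • x₀) r ∨ x ∈ Metric.ball (z - r • x₀) r) →
      c * ballAvg f z r ≤ |T f x|

variable {α : Type*} [MeasurableSpace α]

/-- A Banach lattice of measurable functions on `(α, μ)`: an ideal space of measurable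
functions with a monotone norm. -/
structure BLat (α : Type*) [MeasurableSpace α] (μ : MeasureTheory.Measure α) where
  Mem : (α → ℝ) → Prop
  nrm : (α → ℝ) → ℝ
  aemeasurable_of_mem : ∀ f, Mem f → AEMeasurable f μ
  ideal : ∀ f g, AEMeasurable f μ → Mem g → (∀ᵐ x ∂μ, |f x| ≤ |g x|) → Mem f
  nrm_mono : ∀ f g, Mem f → Mem g → (∀ᵐ x ∂μ, |f x| ≤ |g x|) → nrm f ≤ nrm g
  nrm_nonneg : ∀ f, 0 ≤ nrm f
  add_mem : ∀ f g, Mem f → Mem g → Mem (f + g)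
  nrm_triangle : ∀ f g, Mem f → Mem g → nrm (f + g) ≤ nrm f + nrm g
  smul_mem : ∀ (a : ℝ) (f), Mem f → Mem (fun x => a * f x)
  nrm_smul : ∀ (a : ℝ) (f), nrm (fun x => a * f x) = |a| * nrm f

/-- A quasi-normed lattice of measurable functions on `(α, μ)`, with quasi-triangle
constant `κ`. -/
structure QLat (α : Type*) [MeasurableSpace α] (μ : MeasureTheory.Measure α) where
  Mem : (α → ℝ) → Prop
  nrm : (α → ℝ) → ℝ
  κ : ℝ
  one_le_κ : 1 ≤ κ
  aemeasurable_of_mem : ∀ f, Mem f → AEMeasurable f μ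
  ideal : ∀ f g, AEMeasurable f μ → Mem g → (∀ᵐ x ∂μ, |f x| ≤ |g x|) → Mem f
  nrm_mono : ∀ f g, Mem f → Mem g → (∀ᵐ x ∂μ, |f x| ≤ |g x|) → nrm f ≤ nrm g
  nrm_nonneg : ∀ f, 0 ≤ nrm f
  add_mem : ∀ f g, Mem f → Mem g → Mem (f + g)
  nrm_qtriangle : ∀ f g, Mem f → Mem g → nrm (f + g) ≤ κ * (nrm f + nrm g)
  smul_mem : ∀ (a : ℝ) (f), Mem f → Mem (fun x => a * f x)
  nrm_smul : ∀ (a : ℝ) (f), nrm (fun x => a * f x) = |a| * nrm f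

/-- The Fatou property for a (quasi-)normed lattice of measurable functions given by its
membership predicate and its norm. -/
def FatouRaw (μ : MeasureTheory.Measure α) (Mem : (α → ℝ) → Prop)
    (nrm : (α → ℝ) → ℝ) : Prop :=
  ∀ (F : ℕ → α → ℝ) (f : α → ℝ), (∀ k, Mem (F k)) → (∀ k, nrm (F k) ≤ 1) →
    (∀ᵐ x ∂μ, Tendsto (fun k => F k x) atTop (𝓝 (f x))) → Mem f ∧ nrm f ≤ 1

/-- Order continuity of the norm: if `F k ↓ 0` a.e. then `‖F k‖ → 0`. -/
def OrderContRaw (μ : MeasureTheory.Measure α) (Mem : (α → ℝ) → Prop)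
    (nrm : (α → ℝ) → ℝ) : Prop :=
  ∀ F : ℕ → α → ℝ, (∀ k, Mem (F k)) →
    (∀ᵐ x ∂μ, Antitone (fun k => F k x) ∧
      Tendsto (fun k => F k x) atTop (𝓝 (0 : ℝ))) →
    Tendsto (fun k => nrm (F k)) atTop (𝓝 (0 : ℝ))

/-- Membership in the order dual `X′`: `g` induces a bounded integral functional on `X`. -/
def DualMem (μ : MeasureTheory.Measure α) (Mem : (α → ℝ) → Prop)
    (nrm : (α → ℝ) → ℝ) (g : α → ℝ) : Prop :=
  AEMeasurable g μ ∧ ∃ C : ℝ, ∀ f, Mem f → nrm f ≤ 1 →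
    ∫⁻ x, ENNReal.ofReal (|f x * g x|) ∂μ ≤ ENNReal.ofReal C

/-- The order dual norm: `‖g‖_{X′} = sup {∫|fg| : f ∈ X, ‖f‖_X ≤ 1}`. -/
def DualNrm (μ : MeasureTheory.Measure α) (Mem : (α → ℝ) → Prop)
    (nrm : (α → ℝ) → ℝ) (g : α → ℝ) : ℝ :=
  (⨆ f : {f : α → ℝ // Mem f ∧ nrm f ≤ 1},
    ∫⁻ x, ENNReal.ofReal (|f.1 x * g x|) ∂μ).toReal

/-- The averaging operator associated with a countable collection of balls
`Q_l = B(z l, ρ l)`: `A_S f = Σ_l f_{Q_l}·χ_{Q_l}`. -/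
def AvgOp {n : ℕ} (z : ℕ → En n) (ρ : ℕ → ℝ) (f : En n → ℝ) (x : En n) : ℝ :=
  ∑' l : ℕ, ballAvg f (z l) (ρ l) *
    Set.indicator (Metric.ball (z l) (ρ l)) (fun _ => (1 : ℝ)) x

/-!
For a finite subcollection of the balls `Q_l = B(z_l, ρ_l)`, pick pairwise disjoint sets
`E_l ⊆ Q_l⁺ = B(z_l + ρ_l x₀, ρ_l)` with `|E_l| = δ |Q_l|`, treating the largest ball last: the
earlier pieces that meet `Q_l⁺` come from disjoint balls inside `B(z_l + ρ_l x₀, (3 + ‖x₀‖) ρ_l)`,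
so when `δ (1 + (3 + ‖x₀‖)ⁿ) ≤ 1` they leave at least `δ |Q_l|` of `Q_l⁺` uncovered.
Nondegeneracy gives `c f_{Q_l} ≤ |T(f χ_{Q_l})|` on `E_l` and `c δ f_{Q_l} ≤ |T(f_{Q_l} χ_{E_l})|` on `Q_l`. Since
`|b_j| ≤ 𝔼_ε |∑_l ε_l b_l|` over random signs, each of these bounds `∑_l a_l χ_{R_l}` pointwise
by `c⁻¹ 𝔼_ε |T(∑_l ε_l u_l)|`, whose norm is at most `c⁻¹ C ‖∑_l |u_l|‖`. Used twice, this gives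
`‖∑_{l ∈ I} f_{Q_l} χ_{Q_l}‖ ≤ C² / (c² δ) ‖f‖` uniformly in `I`, and the Fatou property passes
to the whole collection.
-/

section SignedSum

open scoped symmDiff

variable {ι : Type*} [DecidableEq ι]

def signedSum {M : Type*} [AddCommGroup M] (I ε : Finset ι) (u : ι → M) : M :=
  ∑ l ∈ I, if l ∈ ε then u l else -u l

theorem signedSum_apply {β M : Type*} [AddCommGroup M] (I ε : Finset ι) (u : ι → β → M) (x : β) :
    signedSum I ε u x = signedSum I ε (fun l => u l x) := by
  simp only [signedSum, Finset.sum_apply]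
  exact Finset.sum_congr rfl fun l _ => by split_ifs <;> rfl

theorem map_signedSum {M N F : Type*} [AddCommGroup M] [AddCommGroup N] [FunLike F M N]
    [AddMonoidHomClass F M N] (f : F) (I ε : Finset ι) (u : ι → M) :
    f (signedSum I ε u) = signedSum I ε (fun l => f (u l)) := by
  simp only [signedSum, map_sum]
  exact Finset.sum_congr rfl fun l _ => by split_ifs <;> simp

theorem abs_signedSum_le (I ε : Finset ι) (b : ι → ℝ) :
    |signedSum I ε b| ≤ ∑ l ∈ I, |b l| :=
  (Finset.abs_sum_le_sum_abs _ _).trans_eq <|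
    Finset.sum_congr rfl fun l _ => by split_ifs <;> simp

theorem abs_signedSum_sub_toggle {I : Finset ι} {j : ι} (hj : j ∈ I) (ε : Finset ι) (b : ι → ℝ) :
    |signedSum I ε b - signedSum I (ε ∆ {j}) b| = 2 * |b j| := by
  rw [signedSum, signedSum, ← Finset.sum_sub_distrib, Finset.sum_eq_single j]
  · by_cases h : j ∈ ε
    · simp [Finset.mem_symmDiff, h, ← two_mul, abs_mul]
    · simp [Finset.mem_symmDiff, h, ← neg_add', ← two_mul, abs_mul]
  · intro l _ hl
    simp [Finset.mem_symmDiff, hl]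
  · exact fun h => absurd hj h

/-- Flipping the sign of the `j`-th term pairs up the sign patterns so that the two signed sums
of a pair differ by `± 2 bⱼ`. -/
theorem abs_le_avg_abs_signedSum {I : Finset ι} {j : ι} (hj : j ∈ I) (b : ι → ℝ) :
    |b j| ≤ (2 ^ I.card : ℝ)⁻¹ * ∑ ε ∈ I.powerset, |signedSum I ε b| := by
  have htoggle : ∑ ε ∈ I.powerset, |signedSum I (ε ∆ {j}) b| =
      ∑ ε ∈ I.powerset, |signedSum I ε b| := by
    refine Finset.sum_nbij' (· ∆ {j}) (· ∆ {j}) (fun ε hε => ?_) (fun ε hε => ?_)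
      (fun ε _ => symmDiff_symmDiff_cancel_right ..) (fun ε _ => symmDiff_symmDiff_cancel_right ..)
      (fun _ _ => rfl) <;>
    · simp only [Finset.mem_powerset] at hε ⊢
      exact symmDiff_le (le_sup_of_le_right hε)
        (le_sup_of_le_right (Finset.singleton_subset_iff.2 hj))
  have hsum : (2 ^ I.card : ℝ) * (2 * |b j|) ≤ 2 * ∑ ε ∈ I.powerset, |signedSum I ε b| :=
    calc (2 ^ I.card : ℝ) * (2 * |b j|)
        = ∑ ε ∈ I.powerset, |signedSum I ε b - signedSum I (ε ∆ {j}) b| := by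
          simp [abs_signedSum_sub_toggle hj, Finset.card_powerset]
      _ ≤ ∑ ε ∈ I.powerset, (|signedSum I ε b| + |signedSum I (ε ∆ {j}) b|) :=
          Finset.sum_le_sum fun ε _ => abs_sub _ _
      _ = 2 * ∑ ε ∈ I.powerset, |signedSum I ε b| := by
          rw [Finset.sum_add_distrib, htoggle]; ring
  rw [inv_mul_eq_div, le_div_iff₀' (by positivity)]
  linarith

end SignedSum

section IndicatorSum

variable {Ω ι : Type*}

def indicatorSum (I : Finset ι) (R : ι → Set Ω) (a : ι → ℝ) (x : Ω) : ℝ :=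
  ∑ l ∈ I, a l * (R l).indicator (fun _ => (1 : ℝ)) x

theorem indicatorSum_eq_of_mem {I : Finset ι} {R : ι → Set Ω} (hR : (I : Set ι).PairwiseDisjoint R)
    (a : ι → ℝ) {j : ι} (hj : j ∈ I) {x : Ω} (hx : x ∈ R j) : indicatorSum I R a x = a j := by
  rw [indicatorSum, Finset.sum_eq_single_of_mem j hj fun l hl hlj => ?_]
  · simp [hx]
  · simp [Set.indicator_of_notMem ((hR hl hj hlj).notMem_of_mem_right hx)]

theorem indicatorSum_eq_zero {I : Finset ι} {R : ι → Set Ω} (a : ι → ℝ) {x : Ω}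
    (hx : ∀ l ∈ I, x ∉ R l) : indicatorSum I R a x = 0 :=
  Finset.sum_eq_zero fun l hl => by simp [hx l hl]

theorem indicatorSum_nonneg (I : Finset ι) (R : ι → Set Ω) {a : ι → ℝ} (ha : ∀ l, 0 ≤ a l) (x : Ω) :
    0 ≤ indicatorSum I R a x :=
  Finset.sum_nonneg fun l _ => mul_nonneg (ha l) (Set.indicator_nonneg (fun _ _ => zero_le_one) x)

theorem indicatorSum_const_mul (I : Finset ι) (R : ι → Set Ω) (r : ℝ) (a : ι → ℝ) (x : Ω) :
    indicatorSum I R (fun l => r * a l) x = r * indicatorSum I R a x := by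
  simp only [indicatorSum, Finset.mul_sum, mul_assoc]

theorem measurable_indicatorSum [MeasurableSpace Ω] {I : Finset ι} {R : ι → Set Ω}
    (hR : ∀ l ∈ I, MeasurableSet (R l)) (a : ι → ℝ) : Measurable (indicatorSum I R a) :=
  Finset.measurable_fun_sum I fun l hl => (measurable_const.indicator (hR l hl)).const_mul (a l)

theorem sum_abs_indicator_le {I : Finset ι} {R : ι → Set Ω}
    (hR : (I : Set ι).PairwiseDisjoint R) (f : Ω → ℝ) (x : Ω) :
    ∑ l ∈ I, |(R l).indicator f x| ≤ |f x| := by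
  have habs : ∀ l, |(R l).indicator f x| = (R l).indicator (fun y => |f y|) x := fun l => by
    by_cases hx : x ∈ R l <;> simp [hx]
  simp only [habs, ← Finset.indicator_biUnion_apply I R hR]
  exact Set.indicator_apply_le' (fun _ => le_rfl) fun _ => abs_nonneg _

theorem abs_indicatorSum_le (I : Finset ι) (R : ι → Set Ω) {a b : ι → ℝ}
    (hab : ∀ l, |a l| ≤ b l) (x : Ω) : |indicatorSum I R a x| ≤ indicatorSum I R b x := by
  refine (Finset.abs_sum_le_sum_abs _ _).trans (Finset.sum_le_sum fun l _ => ?_)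
  rw [abs_mul, abs_of_nonneg (Set.indicator_nonneg (fun _ _ => zero_le_one) x)]
  exact mul_le_mul_of_nonneg_right (hab l) (Set.indicator_nonneg (fun _ _ => zero_le_one) x)

theorem tendsto_indicatorSum_range {R : ℕ → Set Ω} (hR : Pairwise fun i j => Disjoint (R i) (R j))
    (a : ℕ → ℝ) (x : Ω) :
    Tendsto (fun j => indicatorSum (Finset.range j) R a x) atTop
      (𝓝 (∑' l, a l * (R l).indicator (fun _ => (1 : ℝ)) x)) := by
  refine (summable_of_hasFiniteSupport
    (Set.Subsingleton.finite fun l hl m hm => ?_)).hasSum.tendsto_sum_nat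
  by_contra hlm
  have hxl : x ∈ R l := by by_contra h; simp [h] at hl
  have hxm : x ∈ R m := by by_contra h; simp [h] at hm
  exact (hR hlm).notMem_of_mem_left hxl hxm

end IndicatorSum

namespace BLat

variable {μ : Measure α} (X : BLat α μ)

theorem mem_of_abs_le {u v : α → ℝ} (hu : AEMeasurable u μ) (hv : X.Mem v)
    (h : ∀ x, |u x| ≤ |v x|) : X.Mem u ∧ X.nrm u ≤ X.nrm v := by
  have hm := X.ideal u v hu hv (.of_forall h)
  exact ⟨hm, X.nrm_mono u v hm hv (.of_forall h)⟩

theorem mem_abs {u : α → ℝ} (hu : X.Mem u) :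
    X.Mem (fun x => |u x|) ∧ X.nrm (fun x => |u x|) ≤ X.nrm u :=
  X.mem_of_abs_le (X.aemeasurable_of_mem u hu).abs hu fun x => (abs_abs (u x)).le

theorem mem_smul_nrm_le {u : α → ℝ} (hu : X.Mem u) {r M : ℝ} (hr : 0 ≤ r) (hM : X.nrm u ≤ M) :
    X.Mem (fun x => r * u x) ∧ X.nrm (fun x => r * u x) ≤ r * M := by
  refine ⟨X.smul_mem r u hu, ?_⟩
  rw [X.nrm_smul, abs_of_nonneg hr]
  exact mul_le_mul_of_nonneg_left hM hr

/-- `BLat` does not postulate `0 ∈ X`; the member `w` supplies it as `0 • w`. -/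
theorem mem_sum {ι : Type*} {w : α → ℝ} (hw : X.Mem w) (s : Finset ι) {u : ι → α → ℝ}
    (hu : ∀ i ∈ s, X.Mem (u i)) :
    X.Mem (∑ i ∈ s, u i) ∧ X.nrm (∑ i ∈ s, u i) ≤ ∑ i ∈ s, X.nrm (u i) := by
  classical
  induction s using Finset.induction with
  | empty =>
    have h0 : (fun x => (0 : ℝ) * w x) = 0 := funext fun x => zero_mul _
    have hn0 := X.nrm_smul 0 w
    rw [h0, abs_zero, zero_mul] at hn0
    simpa [hn0] using h0 ▸ X.smul_mem 0 w hw
  | insert i s hi ih =>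
    obtain ⟨hs, hsn⟩ := ih fun j hj => hu j (Finset.mem_insert_of_mem hj)
    have hui := hu i (Finset.mem_insert_self i s)
    rw [Finset.sum_insert hi, Finset.sum_insert hi]
    exact ⟨X.add_mem _ _ hui hs, (X.nrm_triangle _ _ hui hs).trans (by linarith)⟩

theorem mem_of_tendsto (hFat : FatouRaw μ X.Mem X.nrm) {F : ℕ → α → ℝ} {f : α → ℝ} {M : ℝ}
    (hF : ∀ k, X.Mem (F k) ∧ X.nrm (F k) ≤ M)
    (hlim : ∀ᵐ x ∂μ, Tendsto (fun k => F k x) atTop (𝓝 (f x))) : X.Mem f ∧ X.nrm f ≤ M := by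
  have hM : 0 ≤ M := (X.nrm_nonneg _).trans (hF 0).2
  have hscaled : ∀ β > M, X.Mem f ∧ X.nrm f ≤ β := by
    intro β hβ
    have hβ0 : 0 < β := hM.trans_lt hβ
    obtain ⟨hmem, hnrm⟩ := hFat (fun k x => β⁻¹ * F k x) (fun x => β⁻¹ * f x)
      (fun k => X.smul_mem _ _ (hF k).1)
      (fun k => by
        rw [X.nrm_smul, abs_of_pos (inv_pos.2 hβ0), inv_mul_le_one₀ hβ0]
        exact (hF k).2.trans hβ.le)
      (hlim.mono fun x hx => hx.const_mul β⁻¹)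
    have hf : (fun x => β * (β⁻¹ * f x)) = f := funext fun x => by field_simp
    refine ⟨hf ▸ X.smul_mem β _ hmem, ?_⟩
    rw [← hf, X.nrm_smul, abs_of_pos hβ0]
    exact mul_le_of_le_one_right hβ0.le hnrm
  exact ⟨(hscaled (M + 1) (by linarith)).1,
    le_of_forall_gt_imp_ge_of_dense fun β hβ => (hscaled β hβ).2⟩

section Domination

variable {T : (α → ℝ) → α → ℝ} {C : ℝ} {ι : Type*} [DecidableEq ι] {I : Finset ι}
  {u : ι → α → ℝ} {G : α → ℝ}

theorem mem_signedSum (hu : ∀ l ∈ I, X.Mem (u l)) (hG : X.Mem G)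
    (huG : ∀ x, ∑ l ∈ I, |u l x| ≤ |G x|) (ε : Finset ι) :
    X.Mem (signedSum I ε u) ∧ X.nrm (signedSum I ε u) ≤ X.nrm G := by
  have hmem : X.Mem (signedSum I ε u) := by
    refine (X.mem_sum hG I fun l hl => ?_).1
    split_ifs
    · exact hu l hl
    · have hneg := X.smul_mem (-1) _ (hu l hl)
      simp only [neg_one_mul] at hneg
      exact hneg
  exact X.mem_of_abs_le (X.aemeasurable_of_mem _ hmem) hG fun x => by
    rw [signedSum_apply]
    exact (abs_signedSum_le I ε _).trans (huG x)

theorem mem_avg_abs_map_signedSum (hC : 0 ≤ C)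
    (hT : ∀ f, X.Mem f → X.Mem (T f) ∧ X.nrm (T f) ≤ C * X.nrm f)
    (hu : ∀ l ∈ I, X.Mem (u l)) (hG : X.Mem G) (huG : ∀ x, ∑ l ∈ I, |u l x| ≤ |G x|) :
    X.Mem (fun x => (2 ^ I.card : ℝ)⁻¹ * ∑ ε ∈ I.powerset, |T (signedSum I ε u) x|) ∧
      X.nrm (fun x => (2 ^ I.card : ℝ)⁻¹ * ∑ ε ∈ I.powerset, |T (signedSum I ε u) x|) ≤
        C * X.nrm G := by
  have hterm : ∀ ε, X.Mem (fun x => |T (signedSum I ε u) x|) ∧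
      X.nrm (fun x => |T (signedSum I ε u) x|) ≤ C * X.nrm G := fun ε => by
    obtain ⟨hε, hεn⟩ := X.mem_signedSum hu hG huG ε
    obtain ⟨hTε, hTεn⟩ := hT _ hε
    obtain ⟨habs, habsn⟩ := X.mem_abs hTε
    exact ⟨habs, habsn.trans (hTεn.trans (mul_le_mul_of_nonneg_left hεn hC))⟩
  obtain ⟨hsum, hsumn⟩ := X.mem_sum hG I.powerset fun ε _ => (hterm ε).1
  have hsumn' : X.nrm (∑ ε ∈ I.powerset, fun x => |T (signedSum I ε u) x|) ≤
      2 ^ I.card * (C * X.nrm G) := by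
    refine hsumn.trans ((Finset.sum_le_sum fun ε _ => (hterm ε).2).trans_eq ?_)
    simp [Finset.card_powerset]
  have hscaled :=
    X.mem_smul_nrm_le hsum (inv_nonneg.2 (by positivity : (0 : ℝ) ≤ 2 ^ I.card)) hsumn'
  simp only [Finset.sum_apply] at hscaled
  rwa [inv_mul_cancel_left₀ (by positivity)] at hscaled

theorem mem_indicatorSum_of_le_abs_map (hlin : IsLinearMap ℝ T) (hC : 0 ≤ C)
    (hT : ∀ f, X.Mem f → X.Mem (T f) ∧ X.nrm (T f) ≤ C * X.nrm f)
    {R : ι → Set α} (hR : ∀ l ∈ I, MeasurableSet (R l)) (hdisj : (I : Set ι).PairwiseDisjoint R)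
    {c : ℝ} (hc : 0 < c) {a : ι → ℝ} (hnd : ∀ l ∈ I, ∀ x ∈ R l, c * |a l| ≤ |T (u l) x|)
    (hu : ∀ l ∈ I, X.Mem (u l)) (hG : X.Mem G) (huG : ∀ x, ∑ l ∈ I, |u l x| ≤ |G x|) :
    X.Mem (indicatorSum I R a) ∧ X.nrm (indicatorSum I R a) ≤ c⁻¹ * (C * X.nrm G) := by
  set H := fun x => (2 ^ I.card : ℝ)⁻¹ * ∑ ε ∈ I.powerset, |T (signedSum I ε u) x|
  obtain ⟨hH, hHn⟩ := X.mem_avg_abs_map_signedSum hC hT hu hG huG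
  have hH0 : ∀ x, 0 ≤ H x := fun x => by positivity
  have hpoint : ∀ x, |indicatorSum I R a x| ≤ |c⁻¹ * H x| := by
    intro x
    rw [abs_of_nonneg (mul_nonneg (inv_nonneg.2 hc.le) (hH0 x))]
    by_cases hx : ∃ j ∈ I, x ∈ R j
    · obtain ⟨j, hj, hxj⟩ := hx
      rw [indicatorSum_eq_of_mem hdisj a hj hxj, le_inv_mul_iff₀ hc]
      refine (hnd j hj x hxj).trans ?_
      have hTsum : ∀ ε, T (signedSum I ε u) x = signedSum I ε fun l => T (u l) x := fun ε => by
        rw [← signedSum_apply]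
        exact congrFun (map_signedSum (IsLinearMap.mk' T hlin) I ε u) x
      simpa only [H, hTsum] using abs_le_avg_abs_signedSum hj fun l => T (u l) x
    · simp only [not_exists, not_and] at hx
      simpa [indicatorSum_eq_zero a hx] using mul_nonneg (inv_nonneg.2 hc.le) (hH0 x)
  obtain ⟨hmem, hnrm⟩ := X.mem_of_abs_le (measurable_indicatorSum hR a).aemeasurable
    (X.smul_mem c⁻¹ H hH) hpoint
  refine ⟨hmem, hnrm.trans ?_⟩
  rw [X.nrm_smul, abs_of_pos (inv_pos.2 hc)]
  exact mul_le_mul_of_nonneg_left hHn (inv_nonneg.2 hc.le)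

end Domination

end BLat

theorem volume_pi_update_Ioc_Icc {n : ℕ} (i₀ : Fin n) (a b r : ℝ) :
    volume (Set.pi Set.univ (Function.update (fun _ => Set.Icc (-r) r) i₀ (Set.Ioc a b))) =
      ENNReal.ofReal (b - a) * ENNReal.ofReal (2 * r) ^ (n - 1) := by
  classical
  rw [volume_pi_pi]
  simp only [Function.apply_update (fun _ (s : Set ℝ) => volume s)]
  rw [Finset.prod_update_of_mem (Finset.mem_univ i₀)]
  simp [Real.volume_Icc, two_mul, Finset.card_sdiff]

theorem volume_inter_le_add_slab {n : ℕ} {A : Set (En n)} {r : ℝ} (hA : A ⊆ closedBall 0 r)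
    (i₀ : Fin n) {a b : ℝ} :
    volume (A ∩ {x | x i₀ ≤ b}) ≤
      volume (A ∩ {x | x i₀ ≤ a}) + ENNReal.ofReal (b - a) * ENNReal.ofReal (2 * r) ^ (n - 1) := by
  classical
  have hslab : A ∩ {x | x i₀ ≤ b} ⊆ (A ∩ {x | x i₀ ≤ a}) ∪
      Set.pi Set.univ (Function.update (fun _ => Set.Icc (-r) r) i₀ (Set.Ioc a b)) := by
    rintro x ⟨hxA, hxb⟩
    rcases le_or_gt (x i₀) a with hxa | hxa
    · exact Or.inl ⟨hxA, hxa⟩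
    refine Or.inr fun i _ => ?_
    rcases eq_or_ne i i₀ with rfl | hi
    · simpa using ⟨hxa, hxb⟩
    · have hxi : |x i| ≤ r := by
        simpa using (norm_le_pi_norm x i).trans (mem_closedBall_zero_iff.1 (hA hxA))
      simpa [hi] using abs_le.1 hxi
  refine (measure_mono hslab).trans ((measure_union_le _ _).trans ?_)
  rw [volume_pi_update_Ioc_Icc]

theorem exists_subset_volume_eq {n : ℕ} (hn : n ≠ 0) {A : Set (En n)} (hA : MeasurableSet A)
    (hAb : Bornology.IsBounded A) {t : ℝ≥0∞} (ht : t ≤ volume A) :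
    ∃ S ⊆ A, MeasurableSet S ∧ volume S = t := by
  obtain ⟨r, hr⟩ := hAb.subset_closedBall 0
  set R := max r 0
  have hR : 0 ≤ R := le_max_right _ _
  have hAR : A ⊆ closedBall 0 R := hr.trans (closedBall_subset_closedBall (le_max_left _ _))
  have hAfin : volume A ≠ ⊤ := hAb.measure_lt_top.ne
  let i₀ : Fin n := ⟨0, Nat.pos_of_ne_zero hn⟩
  have hfin : ∀ s, volume (A ∩ {x | x i₀ ≤ s}) ≠ ⊤ := fun s =>
    ne_top_of_le_ne_top hAfin (measure_mono Set.inter_subset_left)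
  set g : ℝ → ℝ := fun s => (volume (A ∩ {x | x i₀ ≤ s})).toReal
  have hmono : Monotone g := fun a b hab => ENNReal.toReal_mono (hfin b)
    (measure_mono (Set.inter_subset_inter_right _ fun x hx => le_trans hx hab))
  have hcont : Continuous g := by
    refine (LipschitzWith.of_le_add_mul' ((2 * R) ^ (n - 1)) fun b a => ?_).continuous
    rcases le_total b a with hba | hab
    · exact (hmono hba).trans (le_add_of_nonneg_right (by positivity))
    have h := ENNReal.toReal_mono (by finiteness)
      (volume_inter_le_add_slab hAR i₀ (a := a) (b := b))
    rw [ENNReal.toReal_add (hfin a) (by finiteness)] at h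
    simpa [ENNReal.toReal_ofReal, sub_nonneg.2 hab, hR, Real.dist_eq,
      abs_of_nonneg (sub_nonneg.2 hab), mul_comm] using h
  have hcoord : ∀ x ∈ A, |x i₀| ≤ R := fun x hx => by
    simpa using (norm_le_pi_norm x i₀).trans (mem_closedBall_zero_iff.1 (hAR hx))
  have hg0 : g (-(R + 1)) = 0 := by
    have : A ∩ {x | x i₀ ≤ -(R + 1)} = ∅ :=
      Set.eq_empty_of_forall_notMem fun x hx => by linarith [abs_le.1 (hcoord x hx.1), hx.2.out]
    simp only [g, this, measure_empty, ENNReal.toReal_zero]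
  have hg1 : g R = (volume A).toReal := by
    have : A ∩ {x | x i₀ ≤ R} = A :=
      Set.inter_eq_self_of_subset_left fun x hx => (abs_le.1 (hcoord x hx)).2
    simp [g, this]
  obtain ⟨s, -, hs⟩ := intermediate_value_Icc (by linarith : -(R + 1) ≤ R) hcont.continuousOn
    (show t.toReal ∈ Set.Icc (g (-(R + 1))) (g R) by
      rw [hg0, hg1]
      exact ⟨ENNReal.toReal_nonneg, ENNReal.toReal_mono hAfin ht⟩)
  refine ⟨A ∩ {x | x i₀ ≤ s}, Set.inter_subset_left,
    hA.inter (measurableSet_le (measurable_pi_apply i₀) measurable_const), ?_⟩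
  rwa [ENNReal.toReal_eq_toReal_iff' (hfin s) (ne_top_of_le_ne_top hAfin ht)] at hs

theorem ball_subset_of_shifted_balls_meet {E : Type*} [SeminormedAddCommGroup E] [NormedSpace ℝ E]
    (x₀ : E) {z z' : E} {ρ ρ' : ℝ} (hρ : 0 ≤ ρ) (hρρ' : ρ ≤ ρ')
    (hmeet : (ball (z + ρ • x₀) ρ ∩ ball (z' + ρ' • x₀) ρ').Nonempty) :
    ball z ρ ⊆ ball (z' + ρ' • x₀) ((3 + ‖x₀‖) * ρ') := by
  obtain ⟨x, hx, hx'⟩ := hmeet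
  intro y hy
  have hshift : dist z (z + ρ • x₀) = ρ * ‖x₀‖ := by
    rw [dist_self_add_right, norm_smul, Real.norm_of_nonneg hρ]
  rw [mem_ball] at hx hx' hy ⊢
  calc dist y (z' + ρ' • x₀)
      ≤ dist y z + dist z (z + ρ • x₀) + dist (z + ρ • x₀) x + dist x (z' + ρ' • x₀) :=
        (dist_triangle4 y z x _).trans (by linarith [dist_triangle z (z + ρ • x₀) x])
    _ < ρ + ρ * ‖x₀‖ + ρ + ρ' := by rw [hshift, dist_comm _ x]; gcongr
    _ ≤ (3 + ‖x₀‖) * ρ' := by nlinarith [norm_nonneg x₀]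

theorem volume_ball_add {n : ℕ} (x y : En n) (r : ℝ) :
    volume (ball (x + y) r) = volume (ball x r) := by
  rw [Measure.addHaar_ball_center, Measure.addHaar_ball_center volume x]

section Selection

variable {n : ℕ} {ι : Type*} (x₀ : En n) {z : ι → En n} {ρ : ι → ℝ} {δ : ℝ}

theorem volume_shiftedBall_inter_biUnion_le (hρ : ∀ l, 0 < ρ l) {J : Finset ι}
    (hJ : (J : Set ι).PairwiseDisjoint fun l => ball (z l) (ρ l)) {a : ι}
    (hmax : ∀ j ∈ J, ρ j ≤ ρ a) {E : ι → Set (En n)}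
    (hEsub : ∀ j ∈ J, E j ⊆ ball (z j + ρ j • x₀) (ρ j))
    (hEvol : ∀ j ∈ J, volume (E j) = ENNReal.ofReal δ * volume (ball (z j) (ρ j))) :
    volume (ball (z a + ρ a • x₀) (ρ a) ∩ ⋃ j ∈ J, E j) ≤
      ENNReal.ofReal δ * (ENNReal.ofReal ((3 + ‖x₀‖) ^ n) * volume (ball (z a) (ρ a))) := by
  classical
  set Qa := ball (z a + ρ a • x₀) (ρ a)
  set J' := J.filter fun j => (E j ∩ Qa).Nonempty
  have hcover : Qa ∩ ⋃ j ∈ J, E j ⊆ ⋃ j ∈ J', E j := by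
    rintro x ⟨hxQ, hxE⟩
    obtain ⟨j, hj, hxj⟩ := Set.mem_iUnion₂.1 hxE
    exact Set.mem_biUnion (Finset.mem_filter.2 ⟨hj, x, hxj, hxQ⟩) hxj
  have hballs : (⋃ j ∈ J', ball (z j) (ρ j)) ⊆ ball (z a + ρ a • x₀) ((3 + ‖x₀‖) * ρ a) := by
    refine Set.iUnion₂_subset fun j hj => ?_
    obtain ⟨hjJ, hmeet⟩ := Finset.mem_filter.1 hj
    exact ball_subset_of_shifted_balls_meet x₀ (hρ j).le (hmax j hjJ)
      (hmeet.mono (Set.inter_subset_inter_left _ (hEsub j hjJ)))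
  calc volume (Qa ∩ ⋃ j ∈ J, E j)
      ≤ ∑ j ∈ J', volume (E j) := (measure_mono hcover).trans (measure_biUnion_finset_le _ _)
    _ = ENNReal.ofReal δ * volume (⋃ j ∈ J', ball (z j) (ρ j)) := by
      rw [measure_biUnion_finset (hJ.subset (Finset.coe_subset.2 (Finset.filter_subset _ _)))
        fun _ _ => measurableSet_ball, Finset.mul_sum]
      exact Finset.sum_congr rfl fun j hj => hEvol j (Finset.mem_filter.1 hj).1
    _ ≤ ENNReal.ofReal δ * volume (ball (z a + ρ a • x₀) ((3 + ‖x₀‖) * ρ a)) :=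
      mul_le_mul_right (measure_mono hballs) _
    _ = _ := by
      rw [Measure.addHaar_ball_mul_of_pos _ _ (by positivity),
        Measure.addHaar_ball_center volume (z a)]
      simp

theorem exists_disjoint_subsets_shiftedBall [DecidableEq ι] (hn : n ≠ 0) (hδ0 : 0 ≤ δ)
    (hδ : δ * (1 + (3 + ‖x₀‖) ^ n) ≤ 1) (hρ : ∀ l, 0 < ρ l) (I : Finset ι)
    (hdisj : (I : Set ι).PairwiseDisjoint fun l => ball (z l) (ρ l)) :
    ∃ E : ι → Set (En n), (∀ l ∈ I, MeasurableSet (E l)) ∧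
      (∀ l ∈ I, E l ⊆ ball (z l + ρ l • x₀) (ρ l)) ∧
      (∀ l ∈ I, volume (E l) = ENNReal.ofReal δ * volume (ball (z l) (ρ l))) ∧
      (I : Set ι).PairwiseDisjoint E := by
  induction I using Finset.strongInduction with | H I ih => ?_
  rcases I.eq_empty_or_nonempty with rfl | hI
  · exact ⟨fun _ => ∅, by simp⟩
  obtain ⟨a, ha, hmax⟩ := I.exists_max_image ρ hI
  obtain ⟨E, hEmeas, hEsub, hEvol, hEdisj⟩ :=
    ih (I.erase a) (I.erase_ssubset ha) (hdisj.subset (by simp))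
  set U := ⋃ j ∈ I.erase a, E j
  set Qa := ball (z a + ρ a • x₀) (ρ a)
  have hcover := volume_shiftedBall_inter_biUnion_le x₀ hρ (hdisj.subset (by simp))
    (fun j hj => hmax j (Finset.mem_of_mem_erase hj)) hEsub hEvol
  have hVa : volume Qa = volume (ball (z a) (ρ a)) := volume_ball_add _ _ _
  have hbig : ENNReal.ofReal δ * volume (ball (z a) (ρ a)) ≤ volume (Qa \ U) := by
    refine le_trans ?_ ((tsub_le_tsub_left hcover _).trans
      (Set.sdiff_self_inter (s := Qa) ▸ le_measure_sdiff))
    rw [hVa]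
    refine ENNReal.le_sub_of_add_le_left (by finiteness) ?_
    calc ENNReal.ofReal δ * (ENNReal.ofReal ((3 + ‖x₀‖) ^ n) * volume (ball (z a) (ρ a))) +
          ENNReal.ofReal δ * volume (ball (z a) (ρ a))
        = ENNReal.ofReal (δ * (1 + (3 + ‖x₀‖) ^ n)) * volume (ball (z a) (ρ a)) := by
          rw [mul_add, ENNReal.ofReal_add (by positivity) (by positivity), ENNReal.ofReal_mul hδ0,
            ENNReal.ofReal_mul hδ0, ENNReal.ofReal_one, mul_one]
          ring
      _ ≤ 1 * volume (ball (z a) (ρ a)) := by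
          gcongr
          exact ENNReal.ofReal_le_one.2 hδ
      _ = volume (ball (z a) (ρ a)) := one_mul _
  obtain ⟨S, hSsub, hSmeas, hSvol⟩ := exists_subset_volume_eq hn
    (measurableSet_ball.diff ((I.erase a).measurableSet_biUnion hEmeas))
    (isBounded_ball.subset Set.sdiff_subset) hbig
  refine ⟨Function.update E a S, fun l hl => ?_, fun l hl => ?_, fun l hl => ?_, ?_⟩
  · rcases eq_or_ne l a with rfl | hla
    · simpa using hSmeas
    · simpa [hla] using hEmeas l (Finset.mem_erase.2 ⟨hla, hl⟩)
  · rcases eq_or_ne l a with rfl | hla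
    · simpa using hSsub.trans Set.sdiff_subset
    · simpa [hla] using hEsub l (Finset.mem_erase.2 ⟨hla, hl⟩)
  · rcases eq_or_ne l a with rfl | hla
    · simpa using hSvol
    · simpa [hla] using hEvol l (Finset.mem_erase.2 ⟨hla, hl⟩)
  · intro l hl m hm hlm
    have hSE : ∀ j ∈ I.erase a, Disjoint S (E j) := fun j hj =>
      Set.disjoint_left.2 fun x hxS hxj => (hSsub hxS).2 (Set.mem_biUnion hj hxj)
    rw [Finset.mem_coe] at hl hm
    rcases eq_or_ne l a with rfl | hla <;> rcases eq_or_ne m l with rfl | hml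
    · exact absurd rfl hlm
    · simpa [Function.onFun, hml] using hSE m (Finset.mem_erase.2 ⟨hml, hm⟩)
    · exact absurd rfl hlm
    · rcases eq_or_ne m a with rfl | hma
      · simpa [Function.onFun, hla] using (hSE l (Finset.mem_erase.2 ⟨hla, hl⟩)).symm
      · simpa [Function.onFun, hla, hma] using
          hEdisj (Finset.mem_erase.2 ⟨hla, hl⟩) (Finset.mem_erase.2 ⟨hma, hm⟩) hlm

end Selection

section BallAverage

variable {n : ℕ}

theorem ballAvg_eq (w : En n → ℝ) (c : En n) (r : ℝ) :
    ballAvg w c r = (volume (ball c r)).toReal⁻¹ * ∫ y in ball c r, w y := by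
  rw [ballAvg, setAverage_eq, smul_eq_mul, measureReal_def]

theorem ballAvg_nonneg {w : En n → ℝ} (hw : ∀ x, 0 ≤ w x) (c : En n) (r : ℝ) :
    0 ≤ ballAvg w c r := by
  rw [ballAvg_eq]
  exact mul_nonneg (by positivity) (integral_nonneg hw)

theorem abs_ballAvg_le (w : En n → ℝ) (c : En n) (r : ℝ) :
    |ballAvg w c r| ≤ ballAvg (fun y => |w y|) c r := by
  rw [ballAvg_eq, ballAvg_eq, abs_mul, abs_of_nonneg (by positivity)]
  exact mul_le_mul_of_nonneg_left abs_integral_le_integral_abs (by positivity)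

theorem ballAvg_indicator_ball (w : En n → ℝ) (c : En n) (r : ℝ) :
    ballAvg ((ball c r).indicator w) c r = ballAvg w c r := by
  rw [ballAvg_eq, ballAvg_eq, setIntegral_indicator measurableSet_ball, Set.inter_self]

theorem ballAvg_eq_zero_of_not_integrableOn {w : En n → ℝ} {c : En n} {r : ℝ}
    (hw : ¬IntegrableOn w (ball c r)) : ballAvg w c r = 0 := by
  rw [ballAvg_eq, integral_undef hw, mul_zero]

theorem ballAvg_mul_indicator {E : Set (En n)} (hE : MeasurableSet E) {c : En n} {r : ℝ}
    (hr : 0 < r) (hEsub : E ⊆ ball c r) {δ : ℝ} (hδ : 0 ≤ δ)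
    (hEvol : volume E = ENNReal.ofReal δ * volume (ball c r)) (a : ℝ) :
    ballAvg (fun y => a * E.indicator (fun _ => (1 : ℝ)) y) c r = δ * a := by
  rw [ballAvg_eq, integral_const_mul, setIntegral_indicator hE,
    Set.inter_eq_self_of_subset_right hEsub, setIntegral_const, measureReal_def, hEvol,
    ENNReal.toReal_mul, ENNReal.toReal_ofReal hδ, smul_eq_mul, mul_one]
  have hpos : (volume (ball c r)).toReal ≠ 0 :=
    ENNReal.toReal_ne_zero.2 ⟨(measure_ball_pos volume c hr).ne', measure_ball_lt_top.ne⟩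
  field_simp

end BallAverage

namespace NondegAlong

variable {n : ℕ} {T : (En n → ℝ) → En n → ℝ} {x₀ : En n} {c : ℝ}

theorem le_abs_map_indicator_ball (hnd : NondegAlong T x₀ c) {φ : En n → ℝ}
    (hφ : ∀ x, 0 ≤ φ x) {z : En n} {r : ℝ} (hr : 0 < r) {x : En n}
    (hx : x ∈ ball (z + r • x₀) r) :
    c * ballAvg φ z r ≤ |T ((ball z r).indicator φ) x| := by
  by_cases hint : IntegrableOn φ (ball z r)
  · rw [← ballAvg_indicator_ball]
    exact hnd z r hr _ (Set.indicator_nonneg fun y _ => hφ y)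
      ((integrable_indicator_iff measurableSet_ball).2 hint).locallyIntegrable
      (fun y hy => Set.indicator_of_notMem hy φ) x (Or.inl hx)
  · rw [ballAvg_eq_zero_of_not_integrableOn hint, mul_zero]
    exact abs_nonneg _

theorem le_abs_map_mul_indicator (hnd : NondegAlong T x₀ c) {E : Set (En n)}
    (hE : MeasurableSet E) {p : En n} {r : ℝ} (hr : 0 < r) (hEsub : E ⊆ ball p r) {δ : ℝ}
    (hδ : 0 ≤ δ) (hEvol : volume E = ENNReal.ofReal δ * volume (ball p r)) {a : ℝ} (ha : 0 ≤ a)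
    {x : En n} (hx : x ∈ ball (p - r • x₀) r) :
    c * (δ * a) ≤ |T (fun y => a * E.indicator (fun _ => (1 : ℝ)) y) x| := by
  rw [← ballAvg_mul_indicator hE hr hEsub hδ hEvol]
  refine hnd p r hr _ (fun y => mul_nonneg ha (Set.indicator_nonneg (fun _ _ => zero_le_one) y))
    ?_ (fun y hy => ?_) x (Or.inr hx)
  · refine (Integrable.const_mul ?_ a).locallyIntegrable
    exact (integrable_indicator_iff hE).2 (integrableOn_const
      (ne_top_of_le_ne_top measure_ball_lt_top.ne (measure_mono hEsub)))
  · rw [Set.indicator_of_notMem (fun hyE => hy (hEsub hyE)), mul_zero]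

end NondegAlong

section FiniteAverage

variable {n : ℕ} (X : BLat (En n) volume) {T : (En n → ℝ) → En n → ℝ} {x₀ : En n} {c C : ℝ}
  {ι : Type*} [DecidableEq ι] {z : ι → En n} {ρ : ι → ℝ}

theorem mem_indicatorSum_ballAvg_of_nonneg (hn : n ≠ 0) (hlin : IsLinearMap ℝ T) (hc : 0 < c)
    (hC : 0 ≤ C) (hnd : NondegAlong T x₀ c)
    (hT : ∀ f, X.Mem f → X.Mem (T f) ∧ X.nrm (T f) ≤ C * X.nrm f) (hρ : ∀ l, 0 < ρ l)
    {I : Finset ι} (hdisj : (I : Set ι).PairwiseDisjoint fun l => ball (z l) (ρ l))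
    {φ : En n → ℝ} (hφ0 : ∀ x, 0 ≤ φ x) (hφ : X.Mem φ) :
    X.Mem (indicatorSum I (fun l => ball (z l) (ρ l)) fun l => ballAvg φ (z l) (ρ l)) ∧
      X.nrm (indicatorSum I (fun l => ball (z l) (ρ l)) fun l => ballAvg φ (z l) (ρ l)) ≤
        (1 + (3 + ‖x₀‖) ^ n) * C ^ 2 / c ^ 2 * X.nrm φ := by
  set K := 1 + (3 + ‖x₀‖) ^ n
  have hK : 0 < K := by positivity
  set a := fun l => ballAvg φ (z l) (ρ l)
  have ha : ∀ l, 0 ≤ a l := fun l => ballAvg_nonneg hφ0 _ _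
  obtain ⟨E, hEmeas, hEsub, hEvol, hEdisj⟩ := exists_disjoint_subsets_shiftedBall x₀ hn
    (inv_nonneg.2 hK.le) (inv_mul_cancel₀ hK.ne').le hρ I hdisj
  have hcut : ∀ l, X.Mem ((ball (z l) (ρ l)).indicator φ) := fun l =>
    (X.mem_of_abs_le ((X.aemeasurable_of_mem φ hφ).indicator measurableSet_ball) hφ fun x => by
      by_cases hx : x ∈ ball (z l) (ρ l) <;> simp [hx]).1
  have hnd₁ : ∀ l ∈ I, ∀ x ∈ E l, c * |a l| ≤ |T ((ball (z l) (ρ l)).indicator φ) x| :=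
    fun l hl x hx => by
      rw [abs_of_nonneg (ha l)]
      exact hnd.le_abs_map_indicator_ball hφ0 (hρ l) (hEsub l hl hx)
  obtain ⟨hG, hGn⟩ := X.mem_indicatorSum_of_le_abs_map hlin hC hT hEmeas hEdisj hc hnd₁
    (fun l _ => hcut l) hφ (sum_abs_indicator_le hdisj φ)
  set v := fun l y => a l * (E l).indicator (fun _ => (1 : ℝ)) y
  have hv : ∀ x, ∑ l ∈ I, |v l x| = |indicatorSum I E a x| := fun x => by
    rw [abs_of_nonneg (indicatorSum_nonneg I E ha x)]
    exact Finset.sum_congr rfl fun l _ =>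
      abs_of_nonneg (mul_nonneg (ha l) (Set.indicator_nonneg (fun _ _ => zero_le_one) x))
  have hvmem : ∀ l ∈ I, X.Mem (v l) := fun l hl =>
    (X.mem_of_abs_le ((measurable_const.indicator (hEmeas l hl)).const_mul _).aemeasurable hG
      fun x => (Finset.single_le_sum (f := fun l => |v l x|) (fun _ _ => abs_nonneg _) hl).trans
        (hv x).le).1
  have hnd₂ : ∀ l ∈ I, ∀ x ∈ ball (z l) (ρ l), c * |K⁻¹ * a l| ≤ |T (v l) x| := by
    intro l hl x hx
    rw [abs_of_nonneg (mul_nonneg (inv_nonneg.2 hK.le) (ha l))]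
    refine hnd.le_abs_map_mul_indicator (hEmeas l hl) (hρ l) (hEsub l hl) (inv_nonneg.2 hK.le)
      (by rw [volume_ball_add, hEvol l hl]) (ha l) ?_
    rwa [add_sub_cancel_right]
  obtain ⟨hA, hAn⟩ := X.mem_indicatorSum_of_le_abs_map hlin hC hT
    (fun _ _ => measurableSet_ball) hdisj hc hnd₂ hvmem hG fun x => (hv x).le
  have hrescale : indicatorSum I (fun l => ball (z l) (ρ l)) a =
      fun x => K * indicatorSum I (fun l => ball (z l) (ρ l)) (fun l => K⁻¹ * a l) x := by
    ext x
    rw [indicatorSum_const_mul, mul_inv_cancel_left₀ hK.ne']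
  obtain ⟨hmem, hnrm⟩ := X.mem_smul_nrm_le hA hK.le hAn
  rw [hrescale]
  refine ⟨hmem, hnrm.trans ?_⟩
  calc K * (c⁻¹ * (C * X.nrm (indicatorSum I E a)))
      ≤ K * (c⁻¹ * (C * (c⁻¹ * (C * X.nrm φ)))) := by gcongr
    _ = K * C ^ 2 / c ^ 2 * X.nrm φ := by field_simp

theorem mem_indicatorSum_ballAvg (hn : n ≠ 0) (hlin : IsLinearMap ℝ T) (hc : 0 < c)
    (hC : 0 ≤ C) (hnd : NondegAlong T x₀ c)
    (hT : ∀ f, X.Mem f → X.Mem (T f) ∧ X.nrm (T f) ≤ C * X.nrm f) (hρ : ∀ l, 0 < ρ l)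
    {I : Finset ι} (hdisj : (I : Set ι).PairwiseDisjoint fun l => ball (z l) (ρ l))
    {f : En n → ℝ} (hf : X.Mem f) :
    X.Mem (indicatorSum I (fun l => ball (z l) (ρ l)) fun l => ballAvg f (z l) (ρ l)) ∧
      X.nrm (indicatorSum I (fun l => ball (z l) (ρ l)) fun l => ballAvg f (z l) (ρ l)) ≤
        (1 + (3 + ‖x₀‖) ^ n) * C ^ 2 / c ^ 2 * X.nrm f := by
  obtain ⟨habs, habsn⟩ := X.mem_abs hf
  obtain ⟨hmem, hnrm⟩ := mem_indicatorSum_ballAvg_of_nonneg X hn hlin hc hC hnd hT hρ hdisj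
    (fun x => abs_nonneg (f x)) habs
  obtain ⟨hmem', hnrm'⟩ := X.mem_of_abs_le
    (measurable_indicatorSum (fun _ _ => measurableSet_ball) _).aemeasurable hmem fun x =>
      (abs_indicatorSum_le I _ (fun l => abs_ballAvg_le f _ _) x).trans (le_abs_self _)
  exact ⟨hmem', hnrm'.trans (hnrm.trans (by gcongr))⟩

end FiniteAverage

theorem ne_zero_of_pairwise_disjoint_balls {n : ℕ} {z : ℕ → En n} {ρ : ℕ → ℝ} (hρ : ∀ l, 0 < ρ l)
    (hdisj : Pairwise fun i j => Disjoint (ball (z i) (ρ i)) (ball (z j) (ρ j))) : n ≠ 0 := by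
  rintro rfl
  refine (hdisj zero_ne_one).notMem_of_mem_left (mem_ball_self (hρ 0)) ?_
  rw [Subsingleton.elim (z 0) (z 1)]
  exact mem_ball_self (hρ 1)

/-- If a linear operator `T`, nondegenerate along a direction, is bounded on a Banach
lattice `X` on `ℝⁿ` with the Fatou property, then the averaging operators `A_S` over
pairwise disjoint collections `S` of balls are uniformly bounded on `X` (with a bound
independent of `S`). -/
theorem stmt15 (n : ℕ) (X : BLat (En n) volume)
    (hFat : FatouRaw volume X.Mem X.nrm)
    (T : (En n → ℝ) → (En n → ℝ)) (hlin : IsLinearMap ℝ T)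
    (x₀ : En n) (c C : ℝ) (hc : 0 < c) (hC : 0 < C)
    (hnd : NondegAlong T x₀ c)
    (hT : ∀ f, X.Mem f → X.Mem (T f) ∧ X.nrm (T f) ≤ C * X.nrm f) :
    ∃ c_a : ℝ, ∀ (z : ℕ → En n) (ρ : ℕ → ℝ), (∀ l, 0 < ρ l) →
      (Pairwise fun i j => Disjoint (Metric.ball (z i) (ρ i)) (Metric.ball (z j) (ρ j))) →
      ∀ f, X.Mem f → X.Mem (AvgOp z ρ f) ∧ X.nrm (AvgOp z ρ f) ≤ c_a * X.nrm f := by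
  refine ⟨(1 + (3 + ‖x₀‖) ^ n) * C ^ 2 / c ^ 2, fun z ρ hρ hdisj f hf => ?_⟩
  have hn := ne_zero_of_pairwise_disjoint_balls hρ hdisj
  refine X.mem_of_tendsto hFat (fun j => ?_) (.of_forall (tendsto_indicatorSum_range hdisj _))
  exact mem_indicatorSum_ballAvg X hn hlin hc hC.le hnd hT hρ (hdisj.set_pairwise _) hf
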